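/- Let f : ℝ → ℝ be continuous with f(s) = c for all s ≤ 0 (c a constant), and let Ψ be a non-negative integrable kernel supported in [θ, L] with 0 < θ < L and ∫Ψ = 1. Then for every t ≥ 0, ∫_0^t ∫_θ^L (f(s) - f(s-τ)) Ψ(τ) dτ ds = ∫_θ^L Ψ(τ) (∫_{t-τ}^t f(s) ds) dτ - c ∫_θ^L Ψ(τ) τ dτ. -/

import Mathlib

/-!
Swap the two integrals (Fubini: the integrand is continuous times an integrable kernel on a
bounded box). For fixed `τ`, the shift `s ↦ s - τ` makes `∫₀ᵗ (f s - f (s - τ)) ds` telescope to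
`∫_{t-τ}^t f - ∫_{-τ}^0 f`, and the last integral is `c τ` because `τ ≥ θ > 0` puts `[-τ, 0]`
inside the history region where `f = c`.
-/

open MeasureTheory intervalIntegral Set

theorem integrableOn_mul_snd_of_continuous {g : ℝ × ℝ → ℝ} (hg : Continuous g) {Ψ : ℝ → ℝ}
    {a b c d : ℝ} (hΨ : IntervalIntegrable Ψ volume c d) :
    IntegrableOn (fun p : ℝ × ℝ => g p * Ψ p.2) (uIoc a b ×ˢ uIoc c d) := by
  have hΨ₂ : IntegrableOn (fun p : ℝ × ℝ => Ψ p.2) (uIoc a b ×ˢ uIoc c d) := by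
    rw [IntegrableOn, Measure.volume_eq_prod, ← Measure.prod_restrict]
    simpa only [one_mul] using
      (integrableOn_const (s := uIoc a b) (C := (1 : ℝ)) measure_Ioc_lt_top.ne).mul_prod hΨ.def'
  exact IntegrableOn.continuousOn_mul_of_subset hg.continuousOn hΨ₂
    (isCompact_uIcc.prod isCompact_uIcc) (measurableSet_uIoc.prod measurableSet_uIoc)
    (prod_mono uIoc_subset_uIcc uIoc_subset_uIcc)

theorem intervalIntegral_swap_mul_of_continuous {g : ℝ × ℝ → ℝ} (hg : Continuous g)
    {Ψ : ℝ → ℝ} {c d : ℝ} (hΨ : IntervalIntegrable Ψ volume c d) (a b : ℝ) :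
    ∫ s in a..b, ∫ τ in c..d, g (s, τ) * Ψ τ = ∫ τ in c..d, ∫ s in a..b, g (s, τ) * Ψ τ :=
  intervalIntegral_intervalIntegral_swap (integrableOn_mul_snd_of_continuous hg hΨ)

theorem integral_sub_comp_sub_right_eq {f : ℝ → ℝ}
    (hf : ∀ a b : ℝ, IntervalIntegrable f volume a b) (t τ : ℝ) :
    ∫ s in (0:ℝ)..t, (f s - f (s - τ)) = (∫ s in (t - τ)..t, f s) - ∫ s in -τ..0, f s := by
  have hf_shift : IntervalIntegrable (fun s => f (s - τ)) volume 0 t := by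
    simpa using (hf (-τ) (t - τ)).comp_sub_right τ
  rw [integral_sub (hf 0 t) hf_shift, integral_comp_sub_right, zero_sub,
    ← integral_add_adjacent_intervals (hf 0 (t - τ)) (hf (t - τ) t),
    ← integral_add_adjacent_intervals (hf (-τ) 0) (hf 0 (t - τ))]
  ring

theorem integral_neg_zero_of_forall_nonpos_eq {f : ℝ → ℝ} {c τ : ℝ}
    (hf : ∀ s ≤ (0:ℝ), f s = c) (hτ : 0 ≤ τ) :
    ∫ s in -τ..0, f s = c * τ := by
  rw [integral_congr (g := fun _ => c) fun s hs => hf s ?_]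
  · simp [mul_comm]
  · rw [uIcc_of_le (neg_nonpos.2 hτ)] at hs
    exact hs.2

theorem continuous_integral_sub_left {f : ℝ → ℝ} (hf : Continuous f) (t : ℝ) :
    Continuous fun τ => ∫ s in (t - τ)..t, f s := by
  simp_rw [integral_symm t]
  exact (continuous_primitive hf.intervalIntegrable t).neg.comp (continuous_sub_left t)

theorem stmt_6_general (f Ψ : ℝ → ℝ) (c θ L : ℝ) (hθ : 0 < θ) (hθL : θ < L)
    (hfc : Continuous f) (hhist : ∀ s ≤ (0:ℝ), f s = c)
    (hΨi : Integrable Ψ) :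
    ∀ t ≥ (0:ℝ),
      (∫ s in (0:ℝ)..t, ∫ τ in θ..L, (f s - f (s - τ)) * Ψ τ)
        = (∫ τ in θ..L, Ψ τ * ∫ s in (t - τ)..t, f s)
          - c * ∫ τ in θ..L, Ψ τ * τ := by
  intro t _
  have hΨ : IntervalIntegrable Ψ volume θ L := hΨi.intervalIntegrable
  have inner : EqOn (fun τ => ∫ s in (0:ℝ)..t, (f s - f (s - τ)) * Ψ τ)
      (fun τ => Ψ τ * (∫ s in (t - τ)..t, f s) - c * (Ψ τ * τ)) (uIcc θ L) := by
    intro τ hτ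
    rw [uIcc_of_le hθL.le] at hτ
    dsimp only
    rw [intervalIntegral.integral_mul_const, integral_sub_comp_sub_right_eq hfc.intervalIntegrable,
      integral_neg_zero_of_forall_nonpos_eq hhist (hθ.le.trans hτ.1)]
    ring
  rw [intervalIntegral_swap_mul_of_continuous (g := fun p => f p.1 - f (p.1 - p.2))
      (by fun_prop) hΨ, integral_congr inner,
    integral_sub (hΨ.mul_continuousOn (continuous_integral_sub_left hfc t).continuousOn)
      ((hΨ.mul_continuousOn (continuousOn_id' _)).const_mul c),
    intervalIntegral.integral_const_mul]

theorem stmt_6 (f Ψ : ℝ → ℝ) (c θ L : ℝ) (hθ : 0 < θ) (hθL : θ < L)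
    (hfc : Continuous f) (hhist : ∀ s ≤ (0:ℝ), f s = c)
    (hΨi : Integrable Ψ) (hΨ0 : ∀ τ, 0 ≤ Ψ τ)
    (hΨs : ∀ τ, τ ∉ Set.Icc θ L → Ψ τ = 0)
    (hΨ1 : ∫ τ : ℝ, Ψ τ = 1) :
    ∀ t ≥ (0:ℝ),
      (∫ s in (0:ℝ)..t, ∫ τ in θ..L, (f s - f (s - τ)) * Ψ τ)
        = (∫ τ in θ..L, Ψ τ * ∫ s in (t - τ)..t, f s)
          - c * ∫ τ in θ..L, Ψ τ * τ :=
  stmt_6_general f Ψ c θ L hθ hθL hfc hhist hΨi
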